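/- arXiv:1809.06651 — 3 statements merged into one kernel-verified Lean document; each statement's English description precedes it below -/
import Mathlib

section
/- Let G be a topological group, X a topological space with a right G-action, and σ = (σ_1, …, σ_n) ∈ G^n an n-tuple of pairwise commuting elements, viewed as constant maps. Set L_σG = {γ ∈ C(ℝ^n, G) : γ(s + e_i) = σ_i^{-1} γ(s) σ_i for all i, s} and 𝓛_σX = {δ ∈ C(ℝ^n, X) : δ(s + e_i) = δ(s)·σ_i for all i, s}. Then: (a) the multiplication (γ, t)·(γ', t') := (s ↦ γ(s) γ'(s − t), t + t') makes L_σG × ℝ^n into a group L_σG ⋊ ℝ^n; (b) each element (σ̄_i, −e_i), where σ̄_i is the constant map with value σ_i, lies in the center of L_σG ⋊ ℝ^n; (c) the formula δ·(γ, t) := (s ↦ δ(s + t)·γ(s + t)) defines a right action of L_σG ⋊ ℝ^n on 𝓛_σX; and (d) each (σ̄_i, −e_i) acts trivially, so the action descends to the quotient of L_σG ⋊ ℝ^n by the central subgroup generated by the (σ̄_i, −e_i). -/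
section

variable {G : Type*} [Group G] [TopologicalSpace G] [IsTopologicalGroup G]
variable {X : Type*} [TopologicalSpace X] {n : ℕ}

/-- Translation `s ↦ s + t` of `ℝⁿ`, as a continuous map. -/
def transMap (n : ℕ) (t : Fin n → ℝ) : C(Fin n → ℝ, Fin n → ℝ) :=
  ⟨fun s => s + t, by continuity⟩

/-- The multiplication `(γ, t)·(γ', t') := (s ↦ γ(s)γ'(s − t), t + t')` on
`C(ℝⁿ, G) × ℝⁿ` (restricting to the semidirect product `L_σG ⋊ ℝⁿ`). -/
def twistMul (p q : C(Fin n → ℝ, G) × (Fin n → ℝ)) : C(Fin n → ℝ, G) × (Fin n → ℝ) :=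
  (p.1 * q.1.comp (transMap n (-p.2)), p.2 + q.2)

/-- The inverse `(γ, t)⁻¹ := (s ↦ γ(s + t)⁻¹, −t)`. -/
def twistInv (p : C(Fin n → ℝ, G) × (Fin n → ℝ)) : C(Fin n → ℝ, G) × (Fin n → ℝ) :=
  ((p.1.comp (transMap n p.2))⁻¹, -p.2)

/-- The right action `δ·(γ, t) := (s ↦ δ(s + t)·γ(s + t))`, where `act : X × G → X` is a
(continuous) right `G`-action on `X`. -/
def twistSmul (act : C(X × G, X)) (δ : C(Fin n → ℝ, X))
    (p : C(Fin n → ℝ, G) × (Fin n → ℝ)) : C(Fin n → ℝ, X) :=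
  act.comp ((δ.comp (transMap n p.2)).prodMk (p.1.comp (transMap n p.2)))

/-- The twisted loop group `L_σG`, for `σ` a tuple of elements of `G` viewed as constant
maps. -/
def LsG (σ : Fin n → G) : Set C(Fin n → ℝ, G) :=
  {γ | ∀ (i : Fin n) (s : Fin n → ℝ), γ (s + Pi.single i 1) = (σ i)⁻¹ * γ s * σ i}

/-- The twisted loop space `𝓛_σX = {δ ∈ C(ℝⁿ, X) : δ(s + eᵢ) = δ(s)·σᵢ}`. -/
def LsX (act : C(X × G, X)) (σ : Fin n → G) : Set C(Fin n → ℝ, X) :=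
  {δ | ∀ (i : Fin n) (s : Fin n → ℝ), δ (s + Pi.single i 1) = act (δ s, σ i)}

/-- The relation identifying `p` with `(σ̄ᵢ, −eᵢ)·p`; the quotient of `L_σG ⋊ ℝⁿ` by the
central subgroup generated by the `(σ̄ᵢ, −eᵢ)` is the quotient by (the equivalence relation
generated by) this relation. -/
def genRel (σ : Fin n → G) (p q : C(Fin n → ℝ, G) × (Fin n → ℝ)) : Prop :=
  ∃ i : Fin n,
    q = twistMul (ContinuousMap.const (Fin n → ℝ) (σ i), -(Pi.single i 1)) p

end

/-!
Every identity is checked pointwise in `G` after translating the argument. The twisting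
condition `γ(s + eᵢ) = σᵢ⁻¹ γ(s) σᵢ` is exactly what makes `(σ̄ᵢ, −eᵢ)` commute with `(γ, t)`,
and `δ(s + eᵢ) = δ(s)·σᵢ` is exactly what makes it act trivially on `δ`. Since
`δ·(p·q) = (δ·p)·q`, the action is then constant on the classes of `p ~ (σ̄ᵢ, −eᵢ)·p`.
-/

section TwistedLoops

variable {G : Type*} [TopologicalSpace G] {X : Type*} [TopologicalSpace X] {n : ℕ}

@[simp] lemma transMap_apply (t s : Fin n → ℝ) : transMap n t s = s + t := rfl

@[simp] lemma twistSmul_apply (act : C(X × G, X)) (δ : C(Fin n → ℝ, X))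
    (p : C(Fin n → ℝ, G) × (Fin n → ℝ)) (s : Fin n → ℝ) :
    twistSmul act δ p s = act (δ (s + p.2), p.1 (s + p.2)) := rfl

lemma continuousMap_prod_ext {p q : C(Fin n → ℝ, G) × (Fin n → ℝ)}
    (h₁ : ∀ s, p.1 s = q.1 s) (h₂ : p.2 = q.2) : p = q :=
  Prod.ext (ContinuousMap.ext h₁) h₂

lemma twistSmul_const_eq_self {act : C(X × G, X)} {σ : Fin n → G} {δ : C(Fin n → ℝ, X)}
    (hδ : δ ∈ LsX act σ) (i : Fin n) :
    twistSmul act δ (ContinuousMap.const (Fin n → ℝ) (σ i), -(Pi.single i 1)) = δ := by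
  ext s
  rw [twistSmul_apply, ContinuousMap.const_apply, ← hδ i, neg_add_cancel_right]

variable [Group G]

lemma twistSmul_one {act : C(X × G, X)} (hact_one : ∀ x : X, act (x, 1) = x)
    (δ : C(Fin n → ℝ, X)) : twistSmul act δ (1, 0) = δ := by
  ext s
  simp [hact_one]

section LoopGroup

variable {σ : Fin n → G}

lemma mem_LsG_shift {γ : C(Fin n → ℝ, G)} (hγ : γ ∈ LsG σ) (t s : Fin n → ℝ) (i : Fin n) :
    γ (s + Pi.single i 1 + t) = (σ i)⁻¹ * γ (s + t) * σ i := by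
  rw [add_right_comm]
  exact hγ i (s + t)

lemma one_mem_LsG : (1 : C(Fin n → ℝ, G)) ∈ LsG σ := fun i s => by simp

lemma const_mem_LsG {i : Fin n} (hc : ∀ j, Commute (σ j) (σ i)) :
    ContinuousMap.const (Fin n → ℝ) (σ i) ∈ LsG σ := fun j s => by
  simp [(hc j).inv_left.eq, mul_assoc]

lemma twistSmul_mem_LsX {act : C(X × G, X)}
    (hact_mul : ∀ (x : X) (g g' : G), act (x, g * g') = act (act (x, g), g'))
    {δ : C(Fin n → ℝ, X)} (hδ : δ ∈ LsX act σ)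
    {p : C(Fin n → ℝ, G) × (Fin n → ℝ)} (hp : p.1 ∈ LsG σ) :
    twistSmul act δ p ∈ LsX act σ := fun i s => by
  have hconj : σ i * ((σ i)⁻¹ * p.1 (s + p.2) * σ i) = p.1 (s + p.2) * σ i := by group
  rw [twistSmul_apply, twistSmul_apply, mem_LsG_shift hp, add_right_comm, hδ i, ← hact_mul,
    hconj, hact_mul]

end LoopGroup

variable [IsTopologicalGroup G]

@[simp] lemma twistMul_fst_apply (p q : C(Fin n → ℝ, G) × (Fin n → ℝ)) (s : Fin n → ℝ) :
    (twistMul p q).1 s = p.1 s * q.1 (s + -p.2) := rfl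

@[simp] lemma twistMul_snd (p q : C(Fin n → ℝ, G) × (Fin n → ℝ)) :
    (twistMul p q).2 = p.2 + q.2 := rfl

@[simp] lemma twistInv_fst_apply (p : C(Fin n → ℝ, G) × (Fin n → ℝ)) (s : Fin n → ℝ) :
    (twistInv p).1 s = (p.1 (s + p.2))⁻¹ := rfl

@[simp] lemma twistInv_snd (p : C(Fin n → ℝ, G) × (Fin n → ℝ)) :
    (twistInv p).2 = -p.2 := rfl

lemma twistMul_assoc (p q r : C(Fin n → ℝ, G) × (Fin n → ℝ)) :
    twistMul (twistMul p q) r = twistMul p (twistMul q r) := by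
  refine continuousMap_prod_ext (fun s => ?_) (add_assoc _ _ _)
  have hshift : s + -(p.2 + q.2) = s + -p.2 + -q.2 := by abel
  simp only [twistMul_fst_apply, twistMul_snd, hshift, mul_assoc]

lemma one_twistMul (p : C(Fin n → ℝ, G) × (Fin n → ℝ)) : twistMul (1, 0) p = p :=
  continuousMap_prod_ext (fun s => by simp) (zero_add _)

lemma twistMul_one (p : C(Fin n → ℝ, G) × (Fin n → ℝ)) : twistMul p (1, 0) = p :=
  continuousMap_prod_ext (fun s => by simp) (add_zero _)

lemma twistMul_twistInv (p : C(Fin n → ℝ, G) × (Fin n → ℝ)) :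
    twistMul p (twistInv p) = (1, 0) := by
  refine continuousMap_prod_ext (fun s => ?_) (add_neg_cancel _)
  simp

lemma twistInv_twistMul (p : C(Fin n → ℝ, G) × (Fin n → ℝ)) :
    twistMul (twistInv p) p = (1, 0) := by
  refine continuousMap_prod_ext (fun s => ?_) (neg_add_cancel _)
  simp

section LoopGroup

variable {σ : Fin n → G}

lemma twistMul_fst_mem_LsG {p q : C(Fin n → ℝ, G) × (Fin n → ℝ)}
    (hp : p.1 ∈ LsG σ) (hq : q.1 ∈ LsG σ) : (twistMul p q).1 ∈ LsG σ := fun i s => by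
  rw [twistMul_fst_apply, twistMul_fst_apply, hp i s, mem_LsG_shift hq]
  group

lemma twistInv_fst_mem_LsG {p : C(Fin n → ℝ, G) × (Fin n → ℝ)} (hp : p.1 ∈ LsG σ) :
    (twistInv p).1 ∈ LsG σ := fun i s => by
  rw [twistInv_fst_apply, twistInv_fst_apply, mem_LsG_shift hp]
  group

lemma twistMul_const_comm {p : C(Fin n → ℝ, G) × (Fin n → ℝ)} (hp : p.1 ∈ LsG σ) (i : Fin n) :
    twistMul (ContinuousMap.const (Fin n → ℝ) (σ i), -(Pi.single i 1)) p =
      twistMul p (ContinuousMap.const (Fin n → ℝ) (σ i), -(Pi.single i 1)) := by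
  refine continuousMap_prod_ext (fun s => ?_) (add_comm _ _)
  simp only [twistMul_fst_apply, ContinuousMap.const_apply, neg_neg, hp i s]
  group

end LoopGroup

lemma twistSmul_twistSmul {act : C(X × G, X)}
    (hact_mul : ∀ (x : X) (g g' : G), act (x, g * g') = act (act (x, g), g'))
    (δ : C(Fin n → ℝ, X)) (p q : C(Fin n → ℝ, G) × (Fin n → ℝ)) :
    twistSmul act (twistSmul act δ p) q = twistSmul act δ (twistMul p q) := by
  ext s
  have hshift : s + (p.2 + q.2) = s + q.2 + p.2 := by abel
  have hback : s + q.2 + p.2 + -p.2 = s + q.2 := by abel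
  simp only [twistSmul_apply, twistMul_fst_apply, twistMul_snd, hact_mul, hshift, hback]

lemma exists_twistSmul_factor_genRel {act : C(X × G, X)} {σ : Fin n → G}
    (hact_mul : ∀ (x : X) (g g' : G), act (x, g * g') = act (act (x, g), g'))
    {δ : C(Fin n → ℝ, X)} (hδ : δ ∈ LsX act σ) :
    ∃ F : Quot (genRel σ) → C(Fin n → ℝ, X),
      ∀ p, F (Quot.mk (genRel σ) p) = twistSmul act δ p := by
  refine ⟨Quot.lift (twistSmul act δ) ?_, fun p => rfl⟩
  rintro p q ⟨i, rfl⟩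
  rw [← twistSmul_twistSmul hact_mul, twistSmul_const_eq_self hδ i]

end TwistedLoops

/-- (a) `(γ, t)·(γ', t') := (s ↦ γ(s)γ'(s − t), t + t')` makes `L_σG × ℝⁿ` into a group
`L_σG ⋊ ℝⁿ`; (b) each `(σ̄ᵢ, −eᵢ)` is central in it; (c) `δ·(γ, t) := (s ↦ δ(s + t)·γ(s + t))`
is a right action of `L_σG ⋊ ℝⁿ` on `𝓛_σX`; (d) each `(σ̄ᵢ, −eᵢ)` acts trivially, so the
action descends to the quotient by the central subgroup generated by the `(σ̄ᵢ, −eᵢ)`. -/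
theorem statement3 (G : Type*) [Group G] [TopologicalSpace G] [IsTopologicalGroup G]
    (X : Type*) [TopologicalSpace X] (n : ℕ)
    (act : C(X × G, X))
    (hact_one : ∀ x : X, act (x, 1) = x)
    (hact_mul : ∀ (x : X) (g g' : G), act (x, g * g') = act (act (x, g), g'))
    (σ : Fin n → G) (hc : ∀ i j, Commute (σ i) (σ j)) :
    -- (a) group structure on L_σG × ℝⁿ
    (∀ p q : C(Fin n → ℝ, G) × (Fin n → ℝ), p.1 ∈ LsG σ → q.1 ∈ LsG σ →
      (twistMul p q).1 ∈ LsG σ) ∧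
    (∀ p q r : C(Fin n → ℝ, G) × (Fin n → ℝ),
      twistMul (twistMul p q) r = twistMul p (twistMul q r)) ∧
    ((1 : C(Fin n → ℝ, G)) ∈ LsG σ) ∧
    (∀ p : C(Fin n → ℝ, G) × (Fin n → ℝ),
      twistMul (1, 0) p = p ∧ twistMul p (1, 0) = p) ∧
    (∀ p : C(Fin n → ℝ, G) × (Fin n → ℝ), p.1 ∈ LsG σ → (twistInv p).1 ∈ LsG σ) ∧
    (∀ p : C(Fin n → ℝ, G) × (Fin n → ℝ),
      twistMul p (twistInv p) = (1, 0) ∧ twistMul (twistInv p) p = (1, 0)) ∧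
    -- (b) the elements (σ̄ᵢ, −eᵢ) belong to L_σG × ℝⁿ and are central in it
    (∀ i : Fin n, (ContinuousMap.const (Fin n → ℝ) (σ i) : C(Fin n → ℝ, G)) ∈ LsG σ) ∧
    (∀ (i : Fin n) (p : C(Fin n → ℝ, G) × (Fin n → ℝ)), p.1 ∈ LsG σ →
      twistMul (ContinuousMap.const (Fin n → ℝ) (σ i), -(Pi.single i 1)) p =
        twistMul p (ContinuousMap.const (Fin n → ℝ) (σ i), -(Pi.single i 1))) ∧
    -- (c) right action on 𝓛_σX
    (∀ δ ∈ LsX act σ, ∀ p : C(Fin n → ℝ, G) × (Fin n → ℝ), p.1 ∈ LsG σ →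
      twistSmul act δ p ∈ LsX act σ) ∧
    (∀ δ : C(Fin n → ℝ, X), twistSmul act δ (1, 0) = δ) ∧
    (∀ (δ : C(Fin n → ℝ, X)) (p q : C(Fin n → ℝ, G) × (Fin n → ℝ)),
      twistSmul act (twistSmul act δ p) q = twistSmul act δ (twistMul p q)) ∧
    -- (d) the (σ̄ᵢ, −eᵢ) act trivially, so the action descends to the quotient
    (∀ δ ∈ LsX act σ, ∀ i : Fin n,
      twistSmul act δ (ContinuousMap.const (Fin n → ℝ) (σ i), -(Pi.single i 1)) = δ) ∧
    (∀ δ ∈ LsX act σ,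
      ∃ F : Quot (genRel σ) → C(Fin n → ℝ, X),
        ∀ p : C(Fin n → ℝ, G) × (Fin n → ℝ),
          F (Quot.mk (genRel σ) p) = twistSmul act δ p) :=
  ⟨fun _ _ => twistMul_fst_mem_LsG, twistMul_assoc, one_mem_LsG,
    fun p => ⟨one_twistMul p, twistMul_one p⟩, fun _ => twistInv_fst_mem_LsG,
    fun p => ⟨twistMul_twistInv p, twistInv_twistMul p⟩,
    fun i => const_mem_LsG fun j => hc j i, fun i _ hp => twistMul_const_comm hp i,
    fun _ hδ _ hp => twistSmul_mem_LsX hact_mul hδ hp, twistSmul_one hact_one,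
    twistSmul_twistSmul hact_mul, fun _ hδ => twistSmul_const_eq_self hδ,
    fun _ hδ => exists_twistSmul_factor_genRel hact_mul hδ⟩
end

section
/- Let G and H be groups, σ = (σ_1, …, σ_n) ∈ G^n and τ = (τ_1, …, τ_n) ∈ H^n each n-tuples of pairwise commuting elements of finite order, and let (σ, τ) := ((σ_1, τ_1), …, (σ_n, τ_n)) ∈ (G × H)^n, which is again an n-tuple of pairwise commuting elements of finite order. Then C_{G×H}((σ, τ)) = C_G(σ) × C_H(τ), and the assignment [(g, h), t] ↦ ([g, t], [h, t]) is a well-defined injective group homomorphism Λ_{G×H}((σ, τ)) → Λ_G(σ) × Λ_H(τ) whose image is exactly the fibered product Λ_G(σ) ×_{𝕋^n} Λ_H(τ) = {(a, b) : π_σ(a) = π_τ(b)}, where π_σ : Λ_G(σ) → 𝕋^n and π_τ : Λ_H(τ) → 𝕋^n are the projections [g, t] ↦ t mod ℤ^n. In particular Λ_{G×H}((σ, τ)) ≅ Λ_G(σ) ×_{𝕋^n} Λ_H(τ). -/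
variable {G : Type*} [Group G] {n : ℕ}

/-- `C_G(σ) = ⋂ᵢ C_G(σᵢ)`, the centralizer of the tuple `σ`. -/
def Cgrp (σ : Fin n → G) : Subgroup G := Subgroup.centralizer (Set.range σ)

lemma sigma_mem_Cgrp (σ : Fin n → G) (hc : ∀ i j, Commute (σ i) (σ j)) (i : Fin n) :
    σ i ∈ Cgrp σ := by
  rw [Cgrp, Subgroup.mem_centralizer_iff]
  rintro h ⟨j, rfl⟩
  exact (hc j i).eq

/-- The direct product group `C_G(σ) × ℝⁿ`. -/
abbrev PGrp (σ : Fin n → G) := ↥(Cgrp σ) × Multiplicative (Fin n → ℝ)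

/-- The generator `(σᵢ, -eᵢ)` of `N_σ`. -/
def lamGen (σ : Fin n → G) (hc : ∀ i j, Commute (σ i) (σ j)) (i : Fin n) : PGrp σ :=
  (⟨σ i, sigma_mem_Cgrp σ hc i⟩, Multiplicative.ofAdd (-(Pi.single i 1)))

/-- The subgroup `N_σ` generated by the `(σᵢ, -eᵢ)`. -/
def NSub (σ : Fin n → G) (hc : ∀ i j, Commute (σ i) (σ j)) : Subgroup (PGrp σ) :=
  Subgroup.closure (Set.range (lamGen σ hc))

lemma lamGen_mem_center (σ : Fin n → G) (hc : ∀ i j, Commute (σ i) (σ j)) (i : Fin n) :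
    lamGen σ hc i ∈ Subgroup.center (PGrp σ) := by
  rw [Subgroup.mem_center_iff]
  intro g
  have h := Subgroup.mem_centralizer_iff.mp g.1.2 (σ i) ⟨i, rfl⟩
  apply Prod.ext
  · apply Subtype.ext
    simpa [lamGen] using h.symm
  · exact mul_comm _ _

instance NSub_normal {σ : Fin n → G} {hc : ∀ i j, Commute (σ i) (σ j)} : (NSub σ hc).Normal := by
  constructor
  intro x hx g
  have hle : NSub σ hc ≤ Subgroup.center (PGrp σ) := by
    rw [NSub]
    refine (Subgroup.closure_le _).mpr ?_
    rintro y ⟨i, rfl⟩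
    exact lamGen_mem_center σ hc i
  have h := Subgroup.mem_center_iff.mp (hle hx) g
  rw [h]
  simpa using hx

/-- `Λ_G(σ) := (C_G(σ) × ℝⁿ)/N_σ`. -/
abbrev Lam (σ : Fin n → G) (hc : ∀ i j, Commute (σ i) (σ j)) := PGrp σ ⧸ NSub σ hc

variable {H : Type*} [Group H]

lemma comm_prodTuple (σ : Fin n → G) (τ : Fin n → H)
    (hcσ : ∀ i j, Commute (σ i) (σ j)) (hcτ : ∀ i j, Commute (τ i) (τ j)) :
    ∀ i j, Commute ((fun i => (σ i, τ i)) i) ((fun i => (σ i, τ i)) j) := by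
  intro i j
  exact Prod.ext ((hcσ i j).eq) ((hcτ i j).eq)

lemma mem_Cgrp_fst (σ : Fin n → G) (τ : Fin n → H) {p : G × H}
    (hp : p ∈ Cgrp (fun i => (σ i, τ i))) : p.1 ∈ Cgrp σ := by
  rw [Cgrp, Subgroup.mem_centralizer_iff]
  rintro y ⟨j, rfl⟩
  exact congrArg Prod.fst (Subgroup.mem_centralizer_iff.mp hp (σ j, τ j) ⟨j, rfl⟩)

lemma mem_Cgrp_snd (σ : Fin n → G) (τ : Fin n → H) {p : G × H}
    (hp : p ∈ Cgrp (fun i => (σ i, τ i))) : p.2 ∈ Cgrp τ := by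
  rw [Cgrp, Subgroup.mem_centralizer_iff]
  rintro y ⟨j, rfl⟩
  exact congrArg Prod.snd (Subgroup.mem_centralizer_iff.mp hp (σ j, τ j) ⟨j, rfl⟩)

/-!
The subgroup `N_σ` is the image of `ℤⁿ` under `m ↦ ∏ᵢ (σᵢ, -eᵢ)^{mᵢ} = (∏ᵢ σᵢ^{mᵢ}, -m)`, and this
parametrisation is injective because its `ℝⁿ`-component already recovers `m`; moreover `-ℤⁿ = ℤⁿ`
is exactly the kernel of `ℝⁿ → 𝕋ⁿ`. Hence `((g, h), t) ∈ N_{(σ,τ)}` iff `(g, t) ∈ N_σ` and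
`(h, t) ∈ N_τ`: both conditions force `t = -m` for the same `m`. This is the injectivity of
`[(g, h), t] ↦ ([g, t], [h, t])`. For its image, two classes `[g, t]`, `[h, s]` over the same point
of `𝕋ⁿ` have `s - t ∈ ℤⁿ`, so multiplying `(h, s)` by an element of `N_τ` gives a representative
`(h', t)` with the same `ℝⁿ`-component as `(g, t)`, and `[(g, h'), t]` is a preimage.
-/

open QuotientGroup

theorem Cgrp_pair (σ : Fin n → G) (τ : Fin n → H) :
    Cgrp (fun i => (σ i, τ i)) = (Cgrp σ).prod (Cgrp τ) := by
  ext p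
  refine ⟨fun hp => ⟨mem_Cgrp_fst σ τ hp, mem_Cgrp_snd σ τ hp⟩, fun ⟨hg, hh⟩ => ?_⟩
  rw [Cgrp, Subgroup.mem_centralizer_iff]
  rintro _ ⟨j, rfl⟩
  exact Prod.ext (Subgroup.mem_centralizer_iff.mp hg (σ j) ⟨j, rfl⟩)
    (Subgroup.mem_centralizer_iff.mp hh (τ j) ⟨j, rfl⟩)

variable (n) in
def negIntCastHom : (Fin n → Multiplicative ℤ) →* Multiplicative (Fin n → ℝ) where
  toFun m := Multiplicative.ofAdd fun i => -((m i).toAdd : ℝ)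
  map_one' := by ext; simp
  map_mul' m m' := by ext; simp; ring

theorem negIntCastHom_injective : Function.Injective (negIntCastHom n) := fun m m' h =>
  funext fun i => by simpa [negIntCastHom] using congrFun (congrArg Multiplicative.toAdd h) i

variable (n) in
noncomputable def torusProj :
    Multiplicative (Fin n → ℝ) →* Multiplicative (Fin n → AddCircle (1 : ℝ)) :=
  AddMonoidHom.toMultiplicative
    ((QuotientAddGroup.mk' (AddSubgroup.zmultiples (1 : ℝ))).compLeft (Fin n))

theorem range_negIntCastHom : (negIntCastHom n).range = (torusProj n).ker := by
  ext t
  simp only [MonoidHom.mem_range, MonoidHom.mem_ker]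
  constructor
  · rintro ⟨m, rfl⟩
    funext i
    exact (AddCircle.coe_eq_zero_iff 1).2 ⟨-(m i).toAdd, by simp [negIntCastHom]⟩
  · intro ht
    choose k hk using fun i => (AddCircle.coe_eq_zero_iff 1).1 (congrFun ht i)
    refine ⟨fun i => Multiplicative.ofAdd (-k i), ?_⟩
    simp only [negIntCastHom, MonoidHom.coe_mk, OneHom.coe_mk, toAdd_ofAdd]
    rw [← ofAdd_toAdd t]
    congr 1
    funext i
    simpa using hk i

section Lattice

variable (σ : Fin n → G) (hc : ∀ i j, Commute (σ i) (σ j))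

theorem lamGen_commute (i : Fin n) (x : PGrp σ) : Commute (lamGen σ hc i) x :=
  (Subgroup.mem_center_iff.mp (lamGen_mem_center σ hc i) x).symm

theorem pairwise_commute_zpowers_lamGen : Pairwise fun i j => ∀ x y : Multiplicative ℤ,
    Commute (zpowersHom (PGrp σ) (lamGen σ hc i) x) (zpowersHom (PGrp σ) (lamGen σ hc j) y) :=
  fun i j _ _ _ => (lamGen_commute σ hc i (lamGen σ hc j)).zpow_zpow _ _

def lamGenHom : (Fin n → Multiplicative ℤ) →* PGrp σ :=
  MonoidHom.noncommPiCoprod _ (pairwise_commute_zpowers_lamGen σ hc)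

theorem range_lamGenHom : (lamGenHom σ hc).range = NSub σ hc := by
  rw [lamGenHom, MonoidHom.noncommPiCoprod_range, NSub, ← Set.iUnion_singleton_eq_range,
    Subgroup.closure_iUnion]
  simp only [Subgroup.range_zpowersHom, Subgroup.zpowers_eq_closure]

theorem lamGenHom_mulSingle (i : Fin n) (k : Multiplicative ℤ) :
    lamGenHom σ hc (Pi.mulSingle i k) = lamGen σ hc i ^ k.toAdd :=
  MonoidHom.noncommPiCoprod_mulSingle _ _ _

theorem snd_lamGenHom (m : Fin n → Multiplicative ℤ) :
    (lamGenHom σ hc m).2 = negIntCastHom n m := by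
  refine DFunLike.congr_fun (?_ : (MonoidHom.snd _ _).comp (lamGenHom σ hc) = _) m
  refine MonoidHom.functions_ext' _ _ _ fun i => MonoidHom.ext_mint ?_
  simp only [MonoidHom.coe_comp, Function.comp_apply, MonoidHom.coe_mulSingle,
    lamGenHom_mulSingle, lamGen, negIntCastHom, toAdd_ofAdd, zpow_one, MonoidHom.coe_snd,
    MonoidHom.coe_mk, OneHom.coe_mk]
  congr 1
  funext j
  rcases eq_or_ne j i with rfl | hj <;> simp [*]

theorem NSub_le_ker_torusProj_comp_snd :
    NSub σ hc ≤ ((torusProj n).comp (MonoidHom.snd _ _)).ker := by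
  rw [← range_lamGenHom]
  rintro _ ⟨m, rfl⟩
  rw [MonoidHom.mem_ker, MonoidHom.comp_apply, MonoidHom.coe_snd, snd_lamGenHom,
    ← MonoidHom.mem_ker, ← range_negIntCastHom]
  exact ⟨m, rfl⟩

noncomputable def lamProj : Lam σ hc →* Multiplicative (Fin n → AddCircle (1 : ℝ)) :=
  lift _ _ (NSub_le_ker_torusProj_comp_snd σ hc)

theorem exists_mk_eq_of_torusProj_eq (q : PGrp σ) {t : Multiplicative (Fin n → ℝ)}
    (h : torusProj n q.2 = torusProj n t) : ∃ g : Cgrp σ, (mk (g, t) : Lam σ hc) = mk q := by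
  obtain ⟨m, hm⟩ : q.2⁻¹ * t ∈ (negIntCastHom n).range := by
    rw [range_negIntCastHom, MonoidHom.mem_ker, map_mul, map_inv, h, inv_mul_cancel]
  refine ⟨(q * lamGenHom σ hc m).1, ?_⟩
  have hsnd : (q * lamGenHom σ hc m).2 = t := by
    rw [Prod.snd_mul, snd_lamGenHom, hm, mul_inv_cancel_left]
  rw [← hsnd]
  exact mk_mul_of_mem q ((range_lamGenHom σ hc).le ⟨m, rfl⟩)

end Lattice

section Pair

variable (σ : Fin n → G) (τ : Fin n → H)

def pairFst : PGrp (fun i => (σ i, τ i)) →* PGrp σ where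
  toFun x := (⟨(x.1 : G × H).1, mem_Cgrp_fst σ τ x.1.2⟩, x.2)
  map_one' := rfl
  map_mul' _ _ := rfl

def pairSnd : PGrp (fun i => (σ i, τ i)) →* PGrp τ where
  toFun x := (⟨(x.1 : G × H).2, mem_Cgrp_snd σ τ x.1.2⟩, x.2)
  map_one' := rfl
  map_mul' _ _ := rfl

theorem PGrp_pair_ext {x y : PGrp (fun i => (σ i, τ i))} (hfst : pairFst σ τ x = pairFst σ τ y)
    (hsnd : pairSnd σ τ x = pairSnd σ τ y) : x = y :=
  Prod.ext (Subtype.ext (Prod.ext (congrArg (Subtype.val ∘ Prod.fst) hfst)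
    (congrArg (Subtype.val ∘ Prod.fst) hsnd))) (congrArg Prod.snd hfst :)

variable (hcσ : ∀ i j, Commute (σ i) (σ j)) (hcτ : ∀ i j, Commute (τ i) (τ j))

theorem pairFst_lamGenHom (m : Fin n → Multiplicative ℤ) :
    pairFst σ τ (lamGenHom _ (comm_prodTuple σ τ hcσ hcτ) m) = lamGenHom σ hcσ m := by
  refine DFunLike.congr_fun (?_ : (pairFst σ τ).comp (lamGenHom _ _) = _) m
  refine (MonoidHom.comp_noncommPiCoprod _).trans ?_
  congr 1

theorem pairSnd_lamGenHom (m : Fin n → Multiplicative ℤ) :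
    pairSnd σ τ (lamGenHom _ (comm_prodTuple σ τ hcσ hcτ) m) = lamGenHom τ hcτ m := by
  refine DFunLike.congr_fun (?_ : (pairSnd σ τ).comp (lamGenHom _ _) = _) m
  refine (MonoidHom.comp_noncommPiCoprod _).trans ?_
  congr 1

theorem mem_NSub_pair_iff (x : PGrp (fun i => (σ i, τ i))) :
    x ∈ NSub _ (comm_prodTuple σ τ hcσ hcτ) ↔
      pairFst σ τ x ∈ NSub σ hcσ ∧ pairSnd σ τ x ∈ NSub τ hcτ := by
  simp only [← range_lamGenHom, MonoidHom.mem_range]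
  constructor
  · rintro ⟨m, rfl⟩
    exact ⟨⟨m, (pairFst_lamGenHom σ τ hcσ hcτ m).symm⟩,
      ⟨m, (pairSnd_lamGenHom σ τ hcσ hcτ m).symm⟩⟩
  · rintro ⟨⟨m, hm⟩, ⟨m', hm'⟩⟩
    obtain rfl : m = m' := negIntCastHom_injective <| by
      rw [← snd_lamGenHom σ hcσ, ← snd_lamGenHom τ hcτ, hm, hm']
      rfl
    exact ⟨m, PGrp_pair_ext σ τ (by rw [pairFst_lamGenHom σ τ hcσ hcτ, hm])
      (by rw [pairSnd_lamGenHom σ τ hcσ hcτ, hm'])⟩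

def lamPairHom : Lam _ (comm_prodTuple σ τ hcσ hcτ) →* Lam σ hcσ × Lam τ hcτ :=
  (map _ _ (pairFst σ τ) fun x hx =>
      Subgroup.mem_comap.2 ((mem_NSub_pair_iff σ τ hcσ hcτ x).1 hx).1).prod
    (map _ _ (pairSnd σ τ) fun x hx =>
      Subgroup.mem_comap.2 ((mem_NSub_pair_iff σ τ hcσ hcτ x).1 hx).2)

theorem lamPairHom_injective : Function.Injective (lamPairHom σ τ hcσ hcτ) := by
  refine (injective_iff_map_eq_one _).2 fun a ha => ?_
  obtain ⟨x, rfl⟩ := mk_surjective a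
  rw [eq_one_iff, mem_NSub_pair_iff σ τ hcσ hcτ, ← eq_one_iff, ← eq_one_iff (N := NSub τ hcτ)]
  exact Prod.ext_iff.1 ha

theorem range_lamPairHom : Set.range (lamPairHom σ τ hcσ hcτ) =
    {ab : Lam σ hcσ × Lam τ hcτ | lamProj σ hcσ ab.1 = lamProj τ hcτ ab.2} := by
  ext ⟨a, b⟩
  constructor
  · rintro ⟨c, hc⟩
    obtain ⟨x, rfl⟩ := mk_surjective c
    rw [← hc]
    rfl
  · intro hab
    obtain ⟨p, rfl⟩ := mk_surjective a
    obtain ⟨q, rfl⟩ := mk_surjective b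
    obtain ⟨h, hq⟩ := exists_mk_eq_of_torusProj_eq τ hcτ q hab.symm
    refine ⟨mk (⟨(p.1, h), Cgrp_pair σ τ ▸ Subgroup.mem_prod.2 ⟨p.1.2, h.2⟩⟩, p.2), ?_⟩
    rw [← hq]
    rfl

end Pair

theorem statement12_general (σ : Fin n → G) (τ : Fin n → H)
    (hcσ : ∀ i j, Commute (σ i) (σ j)) (hcτ : ∀ i j, Commute (τ i) (τ j)) :
    (Cgrp (fun i => (σ i, τ i)) = (Cgrp σ).prod (Cgrp τ)) ∧
    ∃ Φ : Lam (fun i => (σ i, τ i)) (comm_prodTuple σ τ hcσ hcτ) →* Lam σ hcσ × Lam τ hcτ,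
      (∀ (p : ↥(Cgrp (fun i => (σ i, τ i)))) (t : Fin n → ℝ),
        Φ (QuotientGroup.mk (p, Multiplicative.ofAdd t)) =
          (QuotientGroup.mk ((⟨(p : G × H).1, mem_Cgrp_fst σ τ p.2⟩ : ↥(Cgrp σ)),
              Multiplicative.ofAdd t),
           QuotientGroup.mk ((⟨(p : G × H).2, mem_Cgrp_snd σ τ p.2⟩ : ↥(Cgrp τ)),
              Multiplicative.ofAdd t))) ∧
      Function.Injective Φ ∧
      ∃ (πσ : Lam σ hcσ →* Multiplicative (Fin n → AddCircle (1 : ℝ)))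
        (πτ : Lam τ hcτ →* Multiplicative (Fin n → AddCircle (1 : ℝ))),
        (∀ (g : ↥(Cgrp σ)) (t : Fin n → ℝ),
          πσ (QuotientGroup.mk (g, Multiplicative.ofAdd t)) =
            Multiplicative.ofAdd (fun i => ((t i : ℝ) : AddCircle (1 : ℝ)))) ∧
        (∀ (h : ↥(Cgrp τ)) (t : Fin n → ℝ),
          πτ (QuotientGroup.mk (h, Multiplicative.ofAdd t)) =
            Multiplicative.ofAdd (fun i => ((t i : ℝ) : AddCircle (1 : ℝ)))) ∧
        Set.range Φ = {ab : Lam σ hcσ × Lam τ hcτ | πσ ab.1 = πτ ab.2} :=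
  ⟨Cgrp_pair σ τ, lamPairHom σ τ hcσ hcτ, fun _ _ => rfl, lamPairHom_injective σ τ hcσ hcτ,
    lamProj σ hcσ, lamProj τ hcτ, fun _ _ => rfl, fun _ _ => rfl, range_lamPairHom σ τ hcσ hcτ⟩

/-- `C_{G×H}((σ,τ)) = C_G(σ) × C_H(τ)`, and `[(g,h),t] ↦ ([g,t],[h,t])` is a well-defined
injective homomorphism `Λ_{G×H}((σ,τ)) → Λ_G(σ) × Λ_H(τ)` whose image is exactly the fibered
product `Λ_G(σ) ×_{𝕋ⁿ} Λ_H(τ)`; in particular `Λ_{G×H}((σ,τ)) ≅ Λ_G(σ) ×_{𝕋ⁿ} Λ_H(τ)`. -/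
theorem statement12 (σ : Fin n → G) (τ : Fin n → H)
    (hcσ : ∀ i j, Commute (σ i) (σ j)) (hcτ : ∀ i j, Commute (τ i) (τ j))
    (hordσ : ∀ i, IsOfFinOrder (σ i)) (hordτ : ∀ i, IsOfFinOrder (τ i)) :
    (Cgrp (fun i => (σ i, τ i)) = (Cgrp σ).prod (Cgrp τ)) ∧
    ∃ Φ : Lam (fun i => (σ i, τ i)) (comm_prodTuple σ τ hcσ hcτ) →* Lam σ hcσ × Lam τ hcτ,
      (∀ (p : ↥(Cgrp (fun i => (σ i, τ i)))) (t : Fin n → ℝ),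
        Φ (QuotientGroup.mk (p, Multiplicative.ofAdd t)) =
          (QuotientGroup.mk ((⟨(p : G × H).1, mem_Cgrp_fst σ τ p.2⟩ : ↥(Cgrp σ)),
              Multiplicative.ofAdd t),
           QuotientGroup.mk ((⟨(p : G × H).2, mem_Cgrp_snd σ τ p.2⟩ : ↥(Cgrp τ)),
              Multiplicative.ofAdd t))) ∧
      Function.Injective Φ ∧
      ∃ (πσ : Lam σ hcσ →* Multiplicative (Fin n → AddCircle (1 : ℝ)))
        (πτ : Lam τ hcτ →* Multiplicative (Fin n → AddCircle (1 : ℝ))),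
        (∀ (g : ↥(Cgrp σ)) (t : Fin n → ℝ),
          πσ (QuotientGroup.mk (g, Multiplicative.ofAdd t)) =
            Multiplicative.ofAdd (fun i => ((t i : ℝ) : AddCircle (1 : ℝ)))) ∧
        (∀ (h : ↥(Cgrp τ)) (t : Fin n → ℝ),
          πτ (QuotientGroup.mk (h, Multiplicative.ofAdd t)) =
            Multiplicative.ofAdd (fun i => ((t i : ℝ) : AddCircle (1 : ℝ)))) ∧
        Set.range Φ = {ab : Lam σ hcσ × Lam τ hcτ | πσ ab.1 = πτ ab.2} :=
  statement12_general σ τ hcσ hcτ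
end

section
/- Let G be a group, H ≤ G a subgroup, X a set with a left H-action, and σ = (σ_1, …, σ_n) ∈ G^n an n-tuple of pairwise commuting elements of finite order. Let R ⊆ H^n be a set containing exactly one representative of each H-conjugacy class of n-tuples τ ∈ H^n that are G-conjugate to σ. Then there is a bijection between the fixed-point set (G ×_H X)^σ = {p ∈ G ×_H X : σ_i·p = p for all i} and the disjoint union ⨿_{τ ∈ R} C_G(τ) ×_{C_H(τ)} X^τ. -/
/-!
A `σ`-fixed point `[g, x]` of `G ×_H X` determines `t ∈ Hⁿ` with `σᵢ g = g tᵢ` and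
`tᵢ • x = x`; `t` is `G`-conjugate to `σ` and well defined up to `H`-conjugation. For `τ ∈ R`
and `b` with `σᵢ b = b τᵢ`, the map `[a, x] ↦ [b a, x]` is a bijection from
`C_G(τ) ×_{C_H(τ)} X^τ` onto the fixed points whose `t` is `H`-conjugate to `τ`: an element of
`H` relating two representatives of the same image point must centralise `τ`.
-/

section

variable {G : Type*} [Group G] {n : ℕ}

/-- The relation `(g·h, x) ∼ (g, h·x)` on `G × X` defining the balanced product `G ×_H X`. -/
def balRel (H : Subgroup G) (X : Type*) [MulAction ↥H X] :
    (G × X) → (G × X) → Prop :=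
  fun p q => ∃ h : ↥H, p.1 = q.1 * (h : G) ∧ q.2 = h • p.2

/-- The balanced product `G ×_H X`. -/
def BalProd (H : Subgroup G) (X : Type*) [MulAction ↥H X] := Quot (balRel H X)

/-- The left `G`-action on `G ×_H X`, `a·[g, x] = [ag, x]`. -/
def gmul (H : Subgroup G) (X : Type*) [MulAction ↥H X] (a : G) :
    BalProd H X → BalProd H X :=
  Quot.lift (fun p => Quot.mk (balRel H X) (a * p.1, p.2)) (by
    rintro p q ⟨h, h1, h2⟩
    apply Quot.sound
    exact ⟨h, by rw [h1, mul_assoc], h2⟩)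

/-- `C_G(τ) = ⋂ᵢ C_G(τᵢ)` for a tuple `τ` of elements of the subgroup `H`. -/
def CGsub (H : Subgroup G) (τ : Fin n → ↥H) : Subgroup G :=
  Subgroup.centralizer (Set.range fun i => ((τ i : G)))

/-- The relation `(a·h, x) ∼ (a, h·x)`, `h ∈ C_H(τ)`, on `C_G(τ) × X^τ`, defining the
balanced product `C_G(τ) ×_{C_H(τ)} X^τ`. -/
def relCH (H : Subgroup G) (X : Type*) [MulAction ↥H X] (τ : Fin n → ↥H) :
    {p : G × X // p.1 ∈ CGsub H τ ∧ ∀ i, τ i • p.2 = p.2} →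
      {p : G × X // p.1 ∈ CGsub H τ ∧ ∀ i, τ i • p.2 = p.2} → Prop :=
  fun p q => ∃ h : ↥H, (∀ i, τ i * h = h * τ i) ∧
    (p : G × X).1 = (q : G × X).1 * (h : G) ∧ (q : G × X).2 = h • (p : G × X).2

end

theorem semiconjBy_iff_eq_conj {M : Type*} [Group M] {g x y : M} :
    SemiconjBy g x y ↔ y = g * x * g⁻¹ :=
  eq_comm.trans eq_mul_inv_iff_mul_eq.symm

theorem exists_conj_eq_iff_exists_semiconjBy {M ι : Type*} [Group M] {t s : ι → M} :
    (∃ g, ∀ i, t i = g * s i * g⁻¹) ↔ ∃ b, ∀ i, SemiconjBy b (t i) (s i) :=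
  ⟨fun ⟨g, hg⟩ => ⟨g⁻¹, fun i => (semiconjBy_iff_eq_conj.2 (hg i)).inv_symm_left⟩,
    fun ⟨b, hb⟩ => ⟨b⁻¹, fun i => semiconjBy_iff_eq_conj.1 (hb i).inv_symm_left⟩⟩

theorem SemiconjBy.of_eq_mul {M : Type*} [Group M] {b b' h t t' s : M}
    (hb : SemiconjBy b t s) (hb' : SemiconjBy b' t' s) (e : b = b' * h) :
    SemiconjBy h t t' := by
  rw [eq_inv_mul_of_mul_eq e.symm]
  exact hb'.inv_symm_left.mul_left hb

section

variable {G : Type*} [Group G] {H : Subgroup G} {X : Type*} [MulAction ↥H X] {n : ℕ}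

theorem mem_CGsub_iff {τ : Fin n → ↥H} {a : G} : a ∈ CGsub H τ ↔ ∀ i, Commute a (τ i : G) := by
  simp [CGsub, Subgroup.mem_centralizer_iff, Commute, SemiconjBy, eq_comm]

theorem balRel_equivalence (H : Subgroup G) (X : Type*) [MulAction ↥H X] :
    Equivalence (balRel H X) where
  refl _ := ⟨1, by simp, by simp⟩
  symm := by
    rintro p q ⟨h, h1, h2⟩
    exact ⟨h⁻¹, by simp [h1], by simp [h2]⟩
  trans := by
    rintro p q r ⟨h, h1, h2⟩ ⟨k, k1, k2⟩
    exact ⟨k * h, by simp [h1, k1, mul_assoc], by rw [k2, h2, mul_smul]⟩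

theorem balProd_mk_eq_iff {p q : G × X} :
    Quot.mk (balRel H X) p = Quot.mk (balRel H X) q ↔ balRel H X p q :=
  ⟨fun e => (balRel_equivalence H X).eqvGen_iff.1 (Quot.eqvGen_exact e), Quot.sound⟩

theorem gmul_mk_eq_self_iff {a g : G} {x : X} :
    gmul H X a (Quot.mk _ (g, x)) = Quot.mk _ (g, x) ↔ ∃ h : ↥H, SemiconjBy g h a ∧ h • x = x :=
  balProd_mk_eq_iff.trans <| exists_congr fun _ => and_congr eq_comm eq_comm

variable {σ : Fin n → G} {τ τ' : Fin n → ↥H}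

def toFixed (b : G) (hb : ∀ i, SemiconjBy b (τ i) (σ i)) :
    Quot (relCH H X τ) → {p : BalProd H X // ∀ i, gmul H X (σ i) p = p} :=
  Quot.lift
    (fun p => ⟨Quot.mk _ (b * p.1.1, p.1.2), fun i =>
      gmul_mk_eq_self_iff.2 ⟨τ i, (hb i).mul_left (mem_CGsub_iff.1 p.2.1 i), p.2.2 i⟩⟩)
    (by
      rintro p q ⟨h, -, e1, e2⟩
      exact Subtype.ext (Quot.sound ⟨h, by rw [e1, mul_assoc], e2⟩))

theorem exists_of_toFixed_mk_eq {b b' : G} {hb : ∀ i, SemiconjBy b (τ i) (σ i)}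
    {hb' : ∀ i, SemiconjBy b' (τ' i) (σ i)}
    {p : {p : G × X // p.1 ∈ CGsub H τ ∧ ∀ i, τ i • p.2 = p.2}}
    {p' : {p : G × X // p.1 ∈ CGsub H τ' ∧ ∀ i, τ' i • p.2 = p.2}}
    (e : toFixed b hb (Quot.mk _ p) = toFixed b' hb' (Quot.mk _ p')) :
    ∃ h : ↥H, b * p.1.1 = b' * p'.1.1 * h ∧ p'.1.2 = h • p.1.2 ∧
      ∀ i, SemiconjBy (h : G) (τ i) (τ' i) := by
  obtain ⟨h, e1, e2⟩ := balProd_mk_eq_iff.1 (congrArg Subtype.val e)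
  refine ⟨h, e1, e2, fun i => ?_⟩
  refine ((hb i).mul_left (mem_CGsub_iff.1 p.2.1 i)).of_eq_mul
    ((hb' i).mul_left (mem_CGsub_iff.1 p'.2.1 i)) ?_
  simpa [mul_assoc] using e1

theorem conj_of_toFixed_eq {b b' : G} {hb : ∀ i, SemiconjBy b (τ i) (σ i)}
    {hb' : ∀ i, SemiconjBy b' (τ' i) (σ i)} {q : Quot (relCH H X τ)} {q' : Quot (relCH H X τ')}
    (e : toFixed b hb q = toFixed b' hb' q') :
    ∃ h : ↥H, ∀ i, τ' i = h * τ i * h⁻¹ := by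
  induction q using Quot.ind
  induction q' using Quot.ind
  obtain ⟨h, -, -, hτ⟩ := exists_of_toFixed_mk_eq e
  exact ⟨h, fun i => Subtype.ext (semiconjBy_iff_eq_conj.1 (hτ i))⟩

theorem toFixed_injective (b : G) (hb : ∀ i, SemiconjBy b (τ i) (σ i)) :
    Function.Injective (toFixed (X := X) b hb) := by
  intro q q' e
  induction q using Quot.ind
  induction q' using Quot.ind
  obtain ⟨h, e1, e2, hτ⟩ := exists_of_toFixed_mk_eq e
  refine Quot.sound ⟨h, fun i => Subtype.ext (hτ i).eq.symm, ?_, e2⟩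
  simpa [mul_assoc] using e1

theorem exists_stabilizing_tuple {g : G} {x : X}
    (hp : ∀ i, gmul H X (σ i) (Quot.mk _ (g, x)) = Quot.mk _ (g, x)) :
    ∃ t : Fin n → ↥H, (∀ i, SemiconjBy g (t i) (σ i)) ∧ ∀ i, t i • x = x := by
  choose t hgt hxt using fun i => gmul_mk_eq_self_iff.1 (hp i)
  exact ⟨t, hgt, hxt⟩

theorem mk_mem_range_toFixed {g : G} {x : X} {t : Fin n → ↥H}
    (hg : ∀ i, SemiconjBy g (t i) (σ i)) (hx : ∀ i, t i • x = x) {h : ↥H}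
    (ht : ∀ i, t i = h * τ i * h⁻¹) (b : G) (hb : ∀ i, SemiconjBy b (τ i) (σ i)) :
    ∃ q, (toFixed b hb q).1 = Quot.mk _ (g, x) := by
  have hτt : ∀ i, SemiconjBy h (τ i) (t i) := fun i => semiconjBy_iff_eq_conj.2 (ht i)
  have hmem : b⁻¹ * (g * h) ∈ CGsub H τ := mem_CGsub_iff.2 fun i =>
    (hb i).inv_symm_left.mul_left ((hg i).mul_left ((hτt i).map H.subtype))
  have hfix : ∀ i, τ i • h⁻¹ • x = h⁻¹ • x := fun i => by
    rw [← mul_smul, ← (hτt i).inv_symm_left.eq, mul_smul, hx]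
  exact ⟨Quot.mk _ ⟨(b⁻¹ * (g * h), h⁻¹ • x), hmem, hfix⟩,
    Quot.sound ⟨h, by simp, by simp⟩⟩

end

theorem statement14_general (G : Type*) [Group G] (H : Subgroup G)
    (X : Type*) [MulAction ↥H X] (n : ℕ)
    (σ : Fin n → G)
    (R : Set (Fin n → ↥H))
    (hR1 : ∀ τ ∈ R, ∃ g : G, ∀ i, ((τ i : G)) = g * σ i * g⁻¹)
    (hR2 : ∀ τ : Fin n → ↥H, (∃ g : G, ∀ i, ((τ i : G)) = g * σ i * g⁻¹) →
      ∃ τ' ∈ R, ∃ h : ↥H, ∀ i, τ i = h * τ' i * h⁻¹)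
    (hR3 : ∀ τ ∈ R, ∀ τ' ∈ R, (∃ h : ↥H, ∀ i, τ i = h * τ' i * h⁻¹) → τ = τ') :
    Nonempty
      ({p : BalProd H X // ∀ i, gmul H X (σ i) p = p} ≃
        Σ τ : R, Quot (relCH H X (τ : Fin n → ↥H))) := by
  choose b hb using fun τ : R => exists_conj_eq_iff_exists_semiconjBy.1 (hR1 τ τ.2)
  refine ⟨(Equiv.ofBijective (fun s => toFixed (b s.1) (hb s.1) s.2) ⟨?_, ?_⟩).symm⟩
  · rintro ⟨τ, q⟩ ⟨τ', q'⟩ e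
    obtain rfl : τ = τ' := Subtype.ext (hR3 _ τ'.2 _ τ.2 (conj_of_toFixed_eq e)).symm
    exact congrArg _ (toFixed_injective _ _ e)
  · rintro ⟨p, hp⟩
    obtain ⟨⟨g, x⟩, rfl⟩ := Quot.exists_rep p
    obtain ⟨t, hgt, hxt⟩ := exists_stabilizing_tuple hp
    obtain ⟨τ, hτR, h, ht⟩ := hR2 t (exists_conj_eq_iff_exists_semiconjBy.2 ⟨g, hgt⟩)
    obtain ⟨q, hq⟩ := mk_mem_range_toFixed hgt hxt ht (b ⟨τ, hτR⟩) (hb _)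
    exact ⟨⟨⟨τ, hτR⟩, q⟩, Subtype.ext hq⟩

/-- If `R ⊆ Hⁿ` contains exactly one representative of each `H`-conjugacy class of tuples
`τ` that are `G`-conjugate to `σ`, then there is a bijection
`(G ×_H X)^σ ≃ ⨿_{τ ∈ R} C_G(τ) ×_{C_H(τ)} X^τ`. -/
theorem statement14 (G : Type*) [Group G] (H : Subgroup G)
    (X : Type*) [MulAction ↥H X] (n : ℕ)
    (σ : Fin n → G)
    (hc : ∀ i j, Commute (σ i) (σ j)) (hord : ∀ i, IsOfFinOrder (σ i))
    (R : Set (Fin n → ↥H))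
    (hR1 : ∀ τ ∈ R, ∃ g : G, ∀ i, ((τ i : G)) = g * σ i * g⁻¹)
    (hR2 : ∀ τ : Fin n → ↥H, (∃ g : G, ∀ i, ((τ i : G)) = g * σ i * g⁻¹) →
      ∃ τ' ∈ R, ∃ h : ↥H, ∀ i, τ i = h * τ' i * h⁻¹)
    (hR3 : ∀ τ ∈ R, ∀ τ' ∈ R, (∃ h : ↥H, ∀ i, τ i = h * τ' i * h⁻¹) → τ = τ') :
    Nonempty
      ({p : BalProd H X // ∀ i, gmul H X (σ i) p = p} ≃
        Σ τ : R, Quot (relCH H X (τ : Fin n → ↥H))) :=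
  statement14_general G H X n σ R hR1 hR2 hR3
end
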